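/- Let K be chosen uniformly from A_π, the set of tridiagonal stochastic matrices in detailed balance with π. Then for each 0 ≤ i ≤ n-1, the random variable 1/K[i,i+1] is regularly varying with exponent 1: for every a > 0, lim_{x→∞} (ax·P[1/K[i,i+1] > ax]) / (x·P[1/K[i,i+1] > x]) = 1. More precisely, the function f(x) = x·P[K[i,i+1] < 1/x] is monotone increasing and bounded above, hence converges to a positive limit β as x → ∞. -/

import Mathlib

/-!
`B_π` lies in the unit cube and is a down-set of the nonnegative orthant: shrinking one
coordinate of a point of `B_π` keeps it in `B_π`. Shrinking the `i`-th coordinate by the factor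
`s / t ≤ 1` therefore maps `B_π ∩ {X_i < t}` into `B_π ∩ {X_i < s}` with Jacobian `s / t`, so
`P[K[i,i+1] < t] ≤ (t / s) P[K[i,i+1] < s]`, i.e. `f(x) = x P[K[i,i+1] < 1/x]` is
nondecreasing. The cube gives `P[K[i,i+1] < t] ≤ t / vol(B_π)`, so `f` is bounded; hence `f`
converges to its supremum `β ≥ f(1) = 1 > 0`, and then `f(ax) / f(x) → β / β = 1`.
-/

open MeasureTheory

/-- Coordinate `i ∈ {1,…,n-1}` of a super-diagonal vector `X ∈ ℝ^{n-1}`, with the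
conventions `X[0] = X[n] = 0`. -/
def extCoord (m : ℕ) (X : Fin m → ℝ) (i : ℕ) : ℝ :=
  if h : 1 ≤ i ∧ i ≤ m then X ⟨i - 1, by omega⟩ else 0

/-- The super-diagonal parameterization `B_π ⊆ ℝ^{n-1}` of birth and death kernels
with stationary distribution `π`; `extCoord X i` is `K[i,i+1]`. -/
def BDSet (n : ℕ) (π : ℕ → ℝ) : Set (Fin (n-1) → ℝ) :=
  {X | ∀ i : ℕ, 1 ≤ i → i ≤ n - 1 →
    0 ≤ extCoord (n-1) X i ∧
    extCoord (n-1) X i ≤ min (1 - π (i-1) / π i * extCoord (n-1) X (i-1))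
                            (π (i+1) / π i * (1 - extCoord (n-1) X (i+1)))}

/-- The uniform (normalized Lebesgue) probability measure on `B_π` (identified with `A_π`). -/
noncomputable def unifBD (n : ℕ) (π : ℕ → ℝ) : Measure (Fin (n-1) → ℝ) :=
  (volume (BDSet n π))⁻¹ • volume.restrict (BDSet n π)

open Set Filter Topology

theorem monotoneOn_mul_comp_one_div {G : ℝ → ℝ}
    (hG : ∀ s t : ℝ, 0 < s → s ≤ t → G t ≤ t / s * G s) :
    MonotoneOn (fun x => x * G (1 / x)) (Ioi 0) := by
  intro x hx y hy hxy
  have hx : 0 < x := hx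
  have hy : 0 < y := hy
  calc x * G (1 / x) ≤ x * ((1 / x) / (1 / y) * G (1 / y)) :=
        mul_le_mul_of_nonneg_left
          (hG _ _ (by positivity) (one_div_le_one_div_of_le hx hxy)) hx.le
    _ = y * G (1 / y) := by field_simp

theorem exists_tendsto_atTop_of_monotoneOn_Ici {F : ℝ → ℝ} {a C : ℝ}
    (hF : MonotoneOn F (Ici a)) (hC : ∀ x, a ≤ x → F x ≤ C) :
    ∃ β, (∀ x, a ≤ x → F x ≤ β) ∧ Tendsto F atTop (𝓝 β) := by
  set g : ℝ → ℝ := fun x => F (max x a)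
  have hg : Monotone g := fun x y hxy =>
    hF (le_max_right x a) (le_max_right y a) (max_le_max_right a hxy)
  have hbdd : BddAbove (range g) := ⟨C, by rintro _ ⟨x, rfl⟩; exact hC _ (le_max_right x a)⟩
  have hFg : ∀ x, a ≤ x → F x = g x := fun x hx => by simp only [g, max_eq_left hx]
  refine ⟨⨆ x, g x, fun x hx => hFg x hx ▸ le_ciSup hbdd x, ?_⟩
  exact (tendsto_atTop_ciSup hg hbdd).congr' <|
    (eventually_ge_atTop a).mono fun x hx => (hFg x hx).symm

theorem Filter.Tendsto.div_comp_const_mul {F : ℝ → ℝ} {β a : ℝ}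
    (hF : Tendsto F atTop (𝓝 β)) (hβ : β ≠ 0) (ha : 0 < a) :
    Tendsto (fun x => F (a * x) / F x) atTop (𝓝 1) := by
  have hFa : Tendsto (fun x => F (a * x)) atTop (𝓝 β) :=
    hF.comp (tendsto_id.const_mul_atTop ha)
  rw [← div_self hβ]
  exact hFa.div hF hβ

section CoordinateScaling

variable {ι : Type*} [Fintype ι] [DecidableEq ι]

theorem volume_preimage_update_mul (j : ι) {c : ℝ} (hc : 0 < c) (A : Set (ι → ℝ)) :
    volume ((fun X : ι → ℝ => Function.update X j (c * X j)) ⁻¹' A)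
      = ENNReal.ofReal c⁻¹ * volume A := by
  set d : ι → ℝ := Function.update 1 j c
  have hdet : LinearMap.det (Matrix.toLin' (Matrix.diagonal d)) = c := by
    rw [LinearMap.det_toLin', Matrix.det_diagonal, Finset.prod_update_of_mem (Finset.mem_univ j)]
    simp
  have hmap : (fun X : ι → ℝ => Function.update X j (c * X j))
      = Matrix.toLin' (Matrix.diagonal d) := by
    funext X k
    rw [Matrix.toLin'_apply, Matrix.mulVec_diagonal]
    by_cases hk : k = j
    · subst hk; simp [d]
    · simp [d, hk]
  rw [hmap, Measure.addHaar_preimage_linearMap _ (hdet ▸ hc.ne'), hdet,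
    abs_of_pos (inv_pos.2 hc)]

theorem restrict_coord_lt_le_mul {S : Set (ι → ℝ)} (j : ι)
    (hS : ∀ X ∈ S, ∀ c ∈ Icc (0 : ℝ) 1, Function.update X j (c * X j) ∈ S)
    {s t : ℝ} (hs : 0 < s) (hst : s ≤ t) :
    volume.restrict S {X | X j < t}
      ≤ ENNReal.ofReal (t / s) * volume.restrict S {X | X j < s} := by
  have hmeas : ∀ r : ℝ, MeasurableSet {X : ι → ℝ | X j < r} := fun r =>
    measurableSet_lt (measurable_pi_apply j) measurable_const
  have ht : 0 < t := hs.trans_le hst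
  have hc : 0 < s / t := div_pos hs ht
  have hsub : {X | X j < t} ∩ S ⊆
      (fun X : ι → ℝ => Function.update X j (s / t * X j)) ⁻¹' ({X | X j < s} ∩ S) := by
    rintro X ⟨hXt, hXS⟩
    refine ⟨?_, hS X hXS _ ⟨hc.le, div_le_one_of_le₀ hst ht.le⟩⟩
    show Function.update X j (s / t * X j) j < s
    rw [Function.update_self]
    calc s / t * X j < s / t * t := mul_lt_mul_of_pos_left hXt hc
      _ = s := div_mul_cancel₀ s ht.ne'
  rw [Measure.restrict_apply (hmeas t), Measure.restrict_apply (hmeas s)]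
  calc volume ({X | X j < t} ∩ S) ≤ _ := measure_mono hsub
    _ = ENNReal.ofReal (t / s) * volume ({X | X j < s} ∩ S) := by
      rw [volume_preimage_update_mul j hc, inv_div]

theorem restrict_coord_lt_le_ofReal {S : Set (ι → ℝ)} (hS : S ⊆ univ.pi fun _ => Icc 0 1)
    (j : ι) (t : ℝ) : volume.restrict S {X | X j < t} ≤ ENNReal.ofReal t := by
  have hsub : {X | X j < t} ∩ S ⊆ univ.pi (Function.update (fun _ => Icc 0 1) j (Ico 0 t)) := by
    rintro X ⟨hXt, hXS⟩ k -
    by_cases hk : k = j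
    · subst hk
      simpa using ⟨(hS hXS k trivial).1, hXt⟩
    · simpa [hk] using hS hXS k trivial
  rw [Measure.restrict_apply (measurableSet_lt (measurable_pi_apply j) measurable_const)]
  calc volume ({X | X j < t} ∩ S) ≤ _ := measure_mono hsub
    _ = ENNReal.ofReal t := by
      rw [volume_pi_pi, Finset.prod_congr rfl fun k _ =>
        Function.apply_update (fun _ s => volume s) _ j _ k,
        Finset.prod_update_of_mem (Finset.mem_univ j)]
      simp

end CoordinateScaling

section BirthDeath

variable {n : ℕ} {π : ℕ → ℝ}

theorem extCoord_zero (m : ℕ) (X : Fin m → ℝ) : extCoord m X 0 = 0 := dif_neg (by omega)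

theorem extCoord_mem {m : ℕ} {X : Fin m → ℝ} {s : Set ℝ} (h0 : (0 : ℝ) ∈ s)
    (hX : ∀ k, X k ∈ s) (i : ℕ) : extCoord m X i ∈ s := by
  unfold extCoord
  split_ifs
  exacts [hX _, h0]

theorem succ_div_self_pos (hπ : ∀ j, 1 ≤ j → j ≤ n → 0 < π j) {i : ℕ}
    (hi1 : 1 ≤ i) (hi2 : i ≤ n - 1) : 0 < π (i+1) / π i :=
  div_pos (hπ _ (by omega) (by omega)) (hπ _ hi1 (by omega))

theorem extCoord_nonneg_of_mem_BDSet {X : Fin (n-1) → ℝ} (hX : X ∈ BDSet n π) (i : ℕ) :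
    0 ≤ extCoord (n-1) X i := by
  by_cases h : 1 ≤ i ∧ i ≤ n - 1
  · exact (hX i h.1 h.2).1
  · simp [extCoord, h]

/-- For `i = 1` the ratio `π 0 / π 1` is arbitrary, but it multiplies `X[0] = 0`. -/
theorem div_mul_extCoord_pred_le (hπ : ∀ j, 1 ≤ j → j ≤ n → 0 < π j) {i : ℕ}
    (hi1 : 1 ≤ i) (hi2 : i ≤ n - 1) {X Y : Fin (n-1) → ℝ}
    (hYX : extCoord (n-1) Y (i-1) ≤ extCoord (n-1) X (i-1)) :
    π (i-1) / π i * extCoord (n-1) Y (i-1) ≤ π (i-1) / π i * extCoord (n-1) X (i-1) := by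
  rcases Nat.lt_or_ge i 2 with hi | hi
  · rw [show i - 1 = 0 by omega, extCoord_zero, extCoord_zero]
  · exact mul_le_mul_of_nonneg_left hYX
      (div_nonneg (hπ _ (by omega) (by omega)).le (hπ _ hi1 (by omega)).le)

theorem BDSet_subset_pi_Icc (hπ : ∀ j, 1 ≤ j → j ≤ n → 0 < π j) :
    BDSet n π ⊆ univ.pi fun _ => Icc 0 1 := by
  intro X hX j _
  have hj : extCoord (n-1) X (j+1) = X j := by
    simp [extCoord, Nat.succ_le_of_lt j.isLt]
  have h0 : ∀ k, extCoord (n-1) (0 : Fin (n-1) → ℝ) k = 0 := fun k => by simp [extCoord]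
  have hpred := div_mul_extCoord_pred_le hπ (i := j+1) (by omega) (by omega) (Y := 0)
    ((h0 _).trans_le (extCoord_nonneg_of_mem_BDSet hX _))
  rw [h0, mul_zero] at hpred
  have hle := ((hX (j+1) (by omega) (by omega)).2).trans (min_le_left _ _)
  rw [hj] at hle
  exact ⟨hj ▸ extCoord_nonneg_of_mem_BDSet hX _, by linarith⟩

theorem mem_BDSet_of_extCoord_le (hπ : ∀ j, 1 ≤ j → j ≤ n → 0 < π j)
    {X Y : Fin (n-1) → ℝ} (hX : X ∈ BDSet n π)
    (hY : ∀ k, 0 ≤ extCoord (n-1) Y k ∧ extCoord (n-1) Y k ≤ extCoord (n-1) X k) :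
    Y ∈ BDSet n π := by
  intro i hi1 hi2
  obtain ⟨-, hXi⟩ := hX i hi1 hi2
  rw [le_min_iff] at hXi ⊢
  have hq := (succ_div_self_pos hπ hi1 hi2).le
  refine ⟨(hY i).1, ?_, ?_⟩
  · linarith [(hY i).2, div_mul_extCoord_pred_le hπ hi1 hi2 (hY (i-1)).2]
  · linarith [(hY i).2, mul_le_mul_of_nonneg_left (sub_le_sub_left (hY (i+1)).2 1) hq]

theorem update_mul_mem_BDSet (hπ : ∀ j, 1 ≤ j → j ≤ n → 0 < π j)
    {X : Fin (n-1) → ℝ} (hX : X ∈ BDSet n π) (j : Fin (n-1)) {c : ℝ}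
    (hc : c ∈ Icc (0 : ℝ) 1) :
    Function.update X j (c * X j) ∈ BDSet n π := by
  refine mem_BDSet_of_extCoord_le hπ hX fun k => ?_
  have hXk := extCoord_nonneg_of_mem_BDSet hX k
  unfold extCoord at hXk ⊢
  split_ifs at hXk ⊢ with hk
  · rw [Function.update_apply]
    split_ifs with hkj
    · rw [← hkj]
      exact ⟨mul_nonneg hc.1 hXk, mul_le_of_le_one_left hXk hc.2⟩
    · exact ⟨hXk, le_rfl⟩
  · exact ⟨le_rfl, le_rfl⟩

theorem exists_pos_pi_Icc_subset_BDSet (hπ : ∀ j, 1 ≤ j → j ≤ n → 0 < π j) :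
    ∃ ε > 0, (univ.pi fun _ => Icc 0 ε) ⊆ BDSet n π := by
  -- `|·|` since `π 0` is unconstrained
  have hev : ∀ i ∈ Finset.Icc 1 (n-1), ∀ᶠ ε in 𝓝 (0 : ℝ),
      ε ≤ 1 - |π (i-1) / π i| * ε ∧ ε ≤ π (i+1) / π i * (1 - ε) := by
    intro i hi
    rw [Finset.mem_Icc] at hi
    have hq := succ_div_self_pos hπ hi.1 hi.2
    have h1 := tendsto_id.eventually_lt
      ((by fun_prop : Continuous fun ε : ℝ => 1 - |π (i-1) / π i| * ε).tendsto' 0 1 (by simp))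
      one_pos
    have h2 := tendsto_id.eventually_lt
      ((by fun_prop : Continuous fun ε : ℝ => π (i+1) / π i * (1 - ε)).tendsto' 0 _ (by simp))
      hq
    exact (h1.and h2).mono fun ε h => ⟨h.1.le, h.2.le⟩
  obtain ⟨ε, hε, hεpos⟩ := ((((Filter.eventually_all_finset _).2 hev).filter_mono
    nhdsWithin_le_nhds).and (self_mem_nhdsWithin : ∀ᶠ ε in 𝓝[>] (0 : ℝ), 0 < ε)).exists
  refine ⟨ε, hεpos, fun X hX i hi1 hi2 => ?_⟩
  have hE : ∀ k, extCoord (n-1) X k ∈ Icc 0 ε :=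
    extCoord_mem ⟨le_rfl, hεpos.le⟩ fun k => hX k trivial
  obtain ⟨h1, h2⟩ := hε i (Finset.mem_Icc.2 ⟨hi1, hi2⟩)
  have hq := (succ_div_self_pos hπ hi1 hi2).le
  refine ⟨(hE i).1, le_min ?_ ?_⟩
  · have : π (i-1) / π i * extCoord (n-1) X (i-1) ≤ |π (i-1) / π i| * ε :=
      (le_abs_self _).trans <| by
        rw [abs_mul, abs_of_nonneg (hE _).1]
        exact mul_le_mul_of_nonneg_left (hE _).2 (abs_nonneg _)
    linarith [(hE i).2]
  · linarith [(hE i).2, mul_le_mul_of_nonneg_left (sub_le_sub_left (hE (i+1)).2 1) hq]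

theorem volume_BDSet_pos (hπ : ∀ j, 1 ≤ j → j ≤ n → 0 < π j) :
    0 < volume (BDSet n π) := by
  obtain ⟨ε, hε, hsub⟩ := exists_pos_pi_Icc_subset_BDSet hπ
  refine lt_of_lt_of_le ?_ (measure_mono hsub)
  rw [volume_pi_pi]
  simpa [Real.volume_Icc] using ENNReal.pow_pos (ENNReal.ofReal_pos.2 hε) _

theorem volume_BDSet_ne_top (hπ : ∀ j, 1 ≤ j → j ≤ n → 0 < π j) :
    volume (BDSet n π) ≠ ⊤ := by
  refine ne_top_of_le_ne_top ?_ (measure_mono (BDSet_subset_pi_Icc hπ))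
  rw [volume_pi_pi]
  simp

theorem isProbabilityMeasure_unifBD (hπ : ∀ j, 1 ≤ j → j ≤ n → 0 < π j) :
    IsProbabilityMeasure (unifBD n π) :=
  ProbabilityTheory.cond_isProbabilityMeasure_of_finite (volume_BDSet_pos hπ).ne'
    (volume_BDSet_ne_top hπ)

theorem unifBD_coord_lt_le_mul (hπ : ∀ j, 1 ≤ j → j ≤ n → 0 < π j) (j : Fin (n-1))
    {s t : ℝ} (hs : 0 < s) (hst : s ≤ t) :
    (unifBD n π {X | X j < t}).toReal ≤ t / s * (unifBD n π {X | X j < s}).toReal := by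
  have := isProbabilityMeasure_unifBD hπ
  have h : unifBD n π {X | X j < t} ≤ ENNReal.ofReal (t / s) * unifBD n π {X | X j < s} := by
    simp only [unifBD, Measure.smul_apply, smul_eq_mul]
    rw [mul_left_comm]
    gcongr
    exact restrict_coord_lt_le_mul j (fun X hX c hc => update_mul_mem_BDSet hπ hX j hc) hs hst
  have h' := ENNReal.toReal_mono (ENNReal.mul_ne_top ENNReal.ofReal_ne_top (measure_ne_top _ _)) h
  rwa [ENNReal.toReal_mul, ENNReal.toReal_ofReal (div_pos (hs.trans_le hst) hs).le] at h'

theorem unifBD_coord_lt_le (hπ : ∀ j, 1 ≤ j → j ≤ n → 0 < π j) (j : Fin (n-1))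
    {t : ℝ} (ht : 0 ≤ t) :
    (unifBD n π {X | X j < t}).toReal ≤ (volume (BDSet n π)).toReal⁻¹ * t := by
  have h : unifBD n π {X | X j < t} ≤ (volume (BDSet n π))⁻¹ * ENNReal.ofReal t := by
    simp only [unifBD, Measure.smul_apply, smul_eq_mul]
    gcongr
    exact restrict_coord_lt_le_ofReal (BDSet_subset_pi_Icc hπ) j t
  have h' := ENNReal.toReal_mono (ENNReal.mul_ne_top
    (ENNReal.inv_ne_top.2 (volume_BDSet_pos hπ).ne') ENNReal.ofReal_ne_top) h
  rwa [ENNReal.toReal_mul, ENNReal.toReal_inv, ENNReal.toReal_ofReal ht] at h'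

theorem unifBD_coord_lt_one (hπ : ∀ j, 1 ≤ j → j ≤ n → 0 < π j) (j : Fin (n-1)) :
    unifBD n π {X | X j < 1} = 1 := by
  have := isProbabilityMeasure_unifBD hπ
  have hmeas : MeasurableSet {X : Fin (n-1) → ℝ | X j < 1} :=
    measurableSet_lt (measurable_pi_apply j) measurable_const
  have hsub : {X : Fin (n-1) → ℝ | X j < 1}ᶜ ∩ BDSet n π ⊆ {X | X j = 1} :=
    fun X ⟨hX1, hXS⟩ =>
    le_antisymm (BDSet_subset_pi_Icc hπ hXS j trivial).2 (not_lt.1 hX1)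
  have hnull : volume {X : Fin (n-1) → ℝ | X j = 1} = 0 := Measure.pi_hyperplane _ j 1
  rw [← prob_compl_eq_zero_iff hmeas]
  simp only [unifBD, Measure.smul_apply, smul_eq_mul]
  rw [Measure.restrict_apply hmeas.compl, measure_mono_null hsub hnull,
    mul_zero]

end BirthDeath

theorem stmt_8_general (n : ℕ) (π : ℕ → ℝ) (hπ : ∀ j, 1 ≤ j → j ≤ n → 0 < π j)
    (i : ℕ) (hi1 : 1 ≤ i) (hi2 : i ≤ n - 1) :
    MonotoneOn (fun x : ℝ => x * (unifBD n π {X | extCoord (n-1) X i < 1/x}).toReal)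
      (Set.Ioi (0:ℝ)) ∧
    (∃ A : ℝ, ∀ x : ℝ, 0 < x →
      x * (unifBD n π {X | extCoord (n-1) X i < 1/x}).toReal ≤ A) ∧
    (∃ β : ℝ, 0 < β ∧
      Filter.Tendsto (fun x : ℝ => x * (unifBD n π {X | extCoord (n-1) X i < 1/x}).toReal)
        Filter.atTop (nhds β)) ∧
    (∀ a : ℝ, 0 < a →
      Filter.Tendsto
        (fun x : ℝ =>
          (a * x * (unifBD n π {X | extCoord (n-1) X i < 1/(a*x)}).toReal) /
            (x * (unifBD n π {X | extCoord (n-1) X i < 1/x}).toReal))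
        Filter.atTop (nhds 1)) := by
  set j : Fin (n-1) := ⟨i - 1, by omega⟩
  have hcoord : ∀ t, {X | extCoord (n-1) X i < t} = {X | X j < t} := fun t => by
    simp [extCoord, hi1, hi2, j]
  simp only [hcoord]
  set F : ℝ → ℝ := fun x => x * (unifBD n π {X | X j < 1 / x}).toReal
  have hmono : MonotoneOn F (Ioi 0) :=
    monotoneOn_mul_comp_one_div fun _ _ hs hst => unifBD_coord_lt_le_mul hπ j hs hst
  set C := (volume (BDSet n π)).toReal⁻¹
  have hbdd : ∀ x, 0 < x → F x ≤ C := fun x hx => calc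
    F x ≤ x * (C * (1 / x)) :=
      mul_le_mul_of_nonneg_left (unifBD_coord_lt_le hπ j (by positivity)) hx.le
    _ = C := by field_simp
  have hF1 : F 1 = 1 := by simp [F, unifBD_coord_lt_one hπ j]
  obtain ⟨β, hFβ, hβ⟩ := exists_tendsto_atTop_of_monotoneOn_Ici
    (hmono.mono fun x (hx : 1 ≤ x) => zero_lt_one.trans_le hx)
    fun x hx => hbdd x (zero_lt_one.trans_le hx)
  have hβ_pos : 0 < β := zero_lt_one.trans_le (hF1 ▸ hFβ 1 le_rfl)
  exact ⟨hmono, ⟨C, hbdd⟩, ⟨β, hβ_pos, hβ⟩,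
    fun a ha => hβ.div_comp_const_mul hβ_pos.ne' ha⟩

/-- Regular variation: for `K` uniform on `A_π`, the function
`f(x) = x·P[K[i,i+1] < 1/x]` is monotone increasing on `(0,∞)` and bounded above,
hence converges to a positive limit `β`, and `1/K[i,i+1]` is regularly varying with
exponent 1: `(ax·P[1/K[i,i+1] > ax])/(x·P[1/K[i,i+1] > x]) → 1` for every `a > 0`. -/
theorem stmt_8 (n : ℕ) (hn : 2 ≤ n) (π : ℕ → ℝ) (hπ : ∀ j, 1 ≤ j → j ≤ n → 0 < π j)
    (hπsum : ∑ j ∈ Finset.Icc 1 n, π j = 1)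
    (i : ℕ) (hi1 : 1 ≤ i) (hi2 : i ≤ n - 1) :
    MonotoneOn (fun x : ℝ => x * (unifBD n π {X | extCoord (n-1) X i < 1/x}).toReal)
      (Set.Ioi (0:ℝ)) ∧
    (∃ A : ℝ, ∀ x : ℝ, 0 < x →
      x * (unifBD n π {X | extCoord (n-1) X i < 1/x}).toReal ≤ A) ∧
    (∃ β : ℝ, 0 < β ∧
      Filter.Tendsto (fun x : ℝ => x * (unifBD n π {X | extCoord (n-1) X i < 1/x}).toReal)
        Filter.atTop (nhds β)) ∧
    (∀ a : ℝ, 0 < a →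
      Filter.Tendsto
        (fun x : ℝ =>
          (a * x * (unifBD n π {X | extCoord (n-1) X i < 1/(a*x)}).toReal) /
            (x * (unifBD n π {X | extCoord (n-1) X i < 1/x}).toReal))
        Filter.atTop (nhds 1)) :=
  stmt_8_general n π hπ i hi1 hi2
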